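/- arXiv:1711.00175 — 3 statements merged into one kernel-verified Lean document; each statement's English description precedes it below -/
import Mathlib

section
/- Let 1 ≤ s_1 < s_2 < … < s_k be integers with gcd(s_1,…,s_k) = 1, and let F(X) = 2k·X^{s_k} − ∑_{j=1}^{k}(X^{s_k+s_j} + X^{s_k−s_j}), the polynomial version of the Laurent polynomial L(z) = 2k − ∑_{j=1}^{k}(z^{s_j} + z^{−s_j}). Then 1 is a root of F of multiplicity exactly 2, and every complex root ζ of F with |ζ| = 1 satisfies ζ = 1. Consequently the roots of L are 1,1, z_1, z_1^{−1}, …, z_{s_k−1}, z_{s_k−1}^{−1} with |z_s| ≠ 1 for all s = 1,…,s_k−1. -/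
/-!
Since `X ^ (m + s) + X ^ (m - s) - 2 X ^ m = X ^ (m - s) (X ^ s - 1) ^ 2`, with `m = s_k` we have
`F = -∑ⱼ X ^ (m - sⱼ) (X ^ sⱼ - 1) ^ 2`. Factoring `X ^ s - 1 = (X - 1)(1 + ⋯ + X ^ (s - 1))` gives
`F = -(X - 1) ^ 2 Q` with `Q(1) = ∑ⱼ sⱼ ^ 2`, which is nonzero because the `sⱼ` have gcd `1`; so `1`
is a double root. On the unit circle `w⁻¹ (w - 1) ^ 2 = -|w - 1| ^ 2`, so
`F(ζ) = ζ ^ m ∑ⱼ |ζ ^ sⱼ - 1| ^ 2`; a root with `|ζ| = 1` thus satisfies `ζ ^ sⱼ = 1` for all `j`,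
and its order divides `gcd(s₁, …, s_k) = 1`.
-/

open Polynomial Complex Finset
open scoped Classical

/-- The circulant graph `C_n(s 0, …, s (k-1))` on vertex set `ZMod n`:
`i` is adjacent to `i ± s j (mod n)` for each `j`. -/
def circulant (n : ℕ) {k : ℕ} (s : Fin k → ℕ) : SimpleGraph (ZMod n) :=
  SimpleGraph.circulantGraph {x : ZMod n | ∃ j : Fin k, x = (s j : ZMod n)}

/-- The odd-valency circulant graph `C_{2n}(s 0, …, s (k-1), n)` on vertex set `ZMod (2n)`:
`i` is adjacent to `i ± s j (mod 2n)` for each `j`, and to `i + n (mod 2n)`. -/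
def circulantOdd (n : ℕ) {k : ℕ} (s : Fin k → ℕ) : SimpleGraph (ZMod (2 * n)) :=
  SimpleGraph.circulantGraph
    ({x : ZMod (2 * n) | ∃ j : Fin k, x = (s j : ZMod (2 * n))} ∪ {(n : ZMod (2 * n))})

/-- The number of spanning trees of `G`: the number of subgraphs of `G` (on the same
vertex set) that are trees. -/
noncomputable def numSpanningTrees {V : Type*} (G : SimpleGraph V) : ℕ :=
  Set.ncard {H : SimpleGraph V | H ≤ G ∧ H.IsTree}

section CommRing

variable {R : Type*} [CommRing R] {ι : Type*} [Fintype ι]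

theorem pow_add_add_pow_sub_eq {x : R} {m s : ℕ} (h : s ≤ m) :
    x ^ (m + s) + x ^ (m - s) = 2 * x ^ m + x ^ (m - s) * (x ^ s - 1) ^ 2 := by
  obtain ⟨d, rfl⟩ := Nat.exists_eq_add_of_le h
  rw [Nat.add_sub_cancel_left]
  ring

theorem C_two_card_mul_X_pow_sub_sum_eq (s : ι → ℕ) {m : ℕ} (h : ∀ j, s j ≤ m) :
    C (2 * (Fintype.card ι : R)) * X ^ m - ∑ j, (X ^ (m + s j) + X ^ (m - s j)) =
      -∑ j, X ^ (m - s j) * (X ^ s j - 1) ^ 2 := by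
  simp_rw [pow_add_add_pow_sub_eq (h _), sum_add_distrib, sum_const, card_univ, nsmul_eq_mul]
  simp only [map_mul, map_natCast, map_ofNat]
  ring

theorem sum_X_pow_mul_X_pow_sub_one_sq_eq_mul (s m : ι → ℕ) :
    ∑ j, X ^ m j * (X ^ s j - 1 : R[X]) ^ 2 =
      (∑ j, X ^ m j * (∑ i ∈ range (s j), X ^ i) ^ 2) * (X - C 1) ^ 2 := by
  simp_rw [sum_mul, map_one, ← mul_geom_sum]
  exact sum_congr rfl fun j _ ↦ by ring

theorem rootMultiplicity_mul_X_sub_C_pow_of_eval_ne_zero {p : R[X]} {a : R} (h : p.eval a ≠ 0)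
    (n : ℕ) : (p * (X - C a) ^ n).rootMultiplicity a = n := by
  rw [rootMultiplicity_mul_X_sub_C_pow (by rintro rfl; exact h eval_zero),
    rootMultiplicity_eq_zero h, zero_add]

end CommRing

theorem sum_natCast_sq_ne_zero_of_gcd_eq_one {R ι : Type*} [Semiring R] [CharZero R]
    [Fintype ι] {s : ι → ℕ} (hgcd : univ.gcd s = 1) : ∑ j, (s j : R) ^ 2 ≠ 0 := by
  suffices ∑ j, s j ^ 2 ≠ 0 by exact_mod_cast this
  intro h
  have hs : ∀ j ∈ univ, s j = 0 := fun j hj ↦ pow_eq_zero_iff two_ne_zero |>.mp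
    (sum_eq_zero_iff.mp h j hj)
  simp [gcd_eq_zero_iff.mpr hs] at hgcd

theorem eq_one_of_pow_eq_one_of_gcd_eq_one {M ι : Type*} [Monoid M] {t : Finset ι} {s : ι → ℕ}
    (hgcd : t.gcd s = 1) {x : M} (h : ∀ j ∈ t, x ^ s j = 1) : x = 1 :=
  orderOf_eq_one_iff.mp <| Nat.dvd_one.mp <|
    hgcd ▸ Finset.dvd_gcd fun j hj ↦ orderOf_dvd_of_pow_eq_one (h j hj)

open ComplexConjugate in
theorem Complex.inv_mul_sub_one_sq {w : ℂ} (hw : ‖w‖ = 1) :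
    w⁻¹ * (w - 1) ^ 2 = -((‖w - 1‖ ^ 2 : ℝ) : ℂ) := by
  have hconj : conj w * w = 1 := by rw [mul_comm, mul_conj', hw]; norm_num
  rw [inv_eq_conj hw, ofReal_pow, ← mul_conj', map_sub, map_one]
  linear_combination (w - 1) * hconj

theorem Complex.pow_eq_one_of_sum_pow_sub_mul_pow_sub_one_sq_eq_zero {ι : Type*} [Fintype ι]
    {ζ : ℂ} (hζ : ‖ζ‖ = 1) {s : ι → ℕ} {m : ℕ} (h : ∀ j, s j ≤ m)
    (h0 : ∑ j, ζ ^ (m - s j) * (ζ ^ s j - 1) ^ 2 = 0) (j : ι) : ζ ^ s j = 1 := by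
  have hζ0 : ζ ≠ 0 := norm_ne_zero_iff.mp (hζ ▸ one_ne_zero)
  have hsum : ∑ j, ζ ^ (m - s j) * (ζ ^ s j - 1) ^ 2 =
      -ζ ^ m * ((∑ j, ‖ζ ^ s j - 1‖ ^ 2 : ℝ) : ℂ) := by
    rw [ofReal_sum, mul_sum]
    refine sum_congr rfl fun j _ ↦ ?_
    rw [pow_sub₀ ζ hζ0 (h j), mul_assoc,
      inv_mul_sub_one_sq (by rw [norm_pow, hζ, one_pow])]
    ring
  rw [hsum, mul_eq_zero, neg_eq_zero, ofReal_eq_zero] at h0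
  have hnorm := h0.resolve_left (pow_ne_zero m hζ0)
  rw [sum_eq_zero_iff_of_nonneg fun j _ ↦ sq_nonneg _] at hnorm
  simpa [sub_eq_zero] using hnorm j (mem_univ j)

theorem statement4_general (k : ℕ) (hk : 0 < k) (s : Fin k → ℕ)
    (hmono : StrictMono s)
    (hgcd : Finset.univ.gcd s = 1) :
    let sk := s ⟨k - 1, Nat.sub_lt hk Nat.one_pos⟩
    let F : Polynomial ℂ := C (2 * (k : ℂ)) * X ^ sk
        - ∑ j : Fin k, (X ^ (sk + s j) + X ^ (sk - s j))
    F.rootMultiplicity 1 = 2 ∧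
      ∀ ζ : ℂ, F.eval ζ = 0 → ‖ζ‖ = 1 → ζ = 1 := by
  intro sk F
  have hle : ∀ j, s j ≤ sk := fun j ↦
    hmono.monotone (Fin.le_def.mpr (Nat.le_sub_one_of_lt j.isLt))
  have hF : F = -∑ j, X ^ (sk - s j) * (X ^ s j - 1) ^ 2 := by
    simpa only [Fintype.card_fin] using C_two_card_mul_X_pow_sub_sum_eq (R := ℂ) s hle
  refine ⟨?_, fun ζ hroot hζ ↦ ?_⟩
  · rw [hF, sum_X_pow_mul_X_pow_sub_one_sq_eq_mul, ← neg_mul]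
    refine rootMultiplicity_mul_X_sub_C_pow_of_eval_ne_zero ?_ 2
    simpa [eval_finsetSum] using sum_natCast_sq_ne_zero_of_gcd_eq_one (R := ℂ) hgcd
  · refine eq_one_of_pow_eq_one_of_gcd_eq_one hgcd fun j _ ↦ ?_
    rw [hF, eval_neg, eval_finsetSum, neg_eq_zero] at hroot
    exact pow_eq_one_of_sum_pow_sub_mul_pow_sub_one_sq_eq_zero hζ hle (by simpa using hroot) j

/-- for `gcd(s_1,…,s_k) = 1`, the polynomial
`F(X) = 2k X^{s_k} - ∑_{j=1}^k (X^{s_k+s_j} + X^{s_k-s_j})` (the polynomial version of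
`L(z) = 2k - ∑ (z^{s_j} + z^{-s_j})`) has `1` as a root of multiplicity exactly `2`,
and every root of `F` of modulus one equals `1`. -/
theorem statement4 (k : ℕ) (hk : 0 < k) (s : Fin k → ℕ)
    (hmono : StrictMono s) (h1 : ∀ j, 1 ≤ s j)
    (hgcd : Finset.univ.gcd s = 1) :
    let sk := s ⟨k - 1, Nat.sub_lt hk Nat.one_pos⟩
    let F : Polynomial ℂ := C (2 * (k : ℂ)) * X ^ sk
        - ∑ j : Fin k, (X ^ (sk + s j) + X ^ (sk - s j))
    F.rootMultiplicity 1 = 2 ∧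
      ∀ ζ : ℂ, F.eval ζ = 0 → ‖ζ‖ = 1 → ζ = 1 :=
  statement4_general k hk s hmono hgcd
end

section
/- Let z_1, …, z_m be nonzero complex numbers none of which equals 1, let H(z) = ∏_{s=1}^{m} (z − z_s)(z − z_s^{−1}), and let n ≥ 1 with ε_n = e^{2πi/n}. Then ∏_{j=1}^{n−1} H(ε_n^j) = ∏_{s=1}^{m} (T_n(w_s) − 1)/(w_s − 1), where w_s = (z_s + z_s^{−1})/2. -/
open Polynomial Complex Finset
open scoped Classical

/-!
Since `ζ = ε_n` is a primitive `n`-th root of unity, `∏_{j<n} (x - ζ^j) = x^n - 1`; dropping the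
factor `j = 0` gives `(a - 1)(a⁻¹ - 1) ∏_{j=1}^{n-1} H_s(ζ^j) = (a^n - 1)(a^{-n} - 1)` for each
factor `H_s` of `H`, `a = z_s`. Both sides are expressed through `w = (a + a⁻¹)/2`: the left
coefficient is `-2 (w - 1)`, and since `2 T_n(w) = a^n + a^{-n}` the right side is
`-2 (T_n(w) - 1)`.
-/

theorem Polynomial.Chebyshev.two_mul_T_eval_eq_pow_add_pow {R : Type*} [CommRing R]
    {x y w : R} (hxy : x * y = 1) (hw : 2 * w = x + y) (n : ℕ) :
    2 * (T R n).eval w = x ^ n + y ^ n := by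
  have h := congrArg (eval w) (C_comp_two_mul_X R n)
  rw [eval_comp, eval_mul, eval_ofNat, eval_X, hw, ← dickson_one_one_eq_chebyshev_C,
    dickson_one_one_eval_add_inv x y hxy, eval_mul, eval_ofNat] at h
  exact h.symm

namespace IsPrimitiveRoot

section IsDomain

variable {R : Type*} [CommRing R] [IsDomain R] {ζ : R} {n : ℕ}

theorem prod_range_sub_pow (hζ : IsPrimitiveRoot ζ n) (hn : 0 < n) (x : R) :
    ∏ j ∈ range n, (x - ζ ^ j) = x ^ n - 1 := by
  simpa [eval_prod] using congrArg (eval x) (X_pow_sub_C_eq_prod hζ hn (one_pow n)).symm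

theorem sub_one_mul_prod_Ico_sub_pow (hζ : IsPrimitiveRoot ζ n) (hn : 0 < n) (x : R) :
    (x - 1) * ∏ j ∈ Ico 1 n, (x - ζ ^ j) = x ^ n - 1 := by
  rw [← hζ.prod_range_sub_pow hn, prod_range_eq_mul_Ico _ hn, pow_zero]

theorem sub_one_mul_sub_one_mul_prod_Ico (hζ : IsPrimitiveRoot ζ n) (hn : 0 < n) (a b : R) :
    (a - 1) * (b - 1) * ∏ j ∈ Ico 1 n, ((ζ ^ j - a) * (ζ ^ j - b)) =
      (a ^ n - 1) * (b ^ n - 1) := by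
  have hswap (j : ℕ) : (ζ ^ j - a) * (ζ ^ j - b) = (a - ζ ^ j) * (b - ζ ^ j) := by ring
  rw [← hζ.sub_one_mul_prod_Ico_sub_pow hn a, ← hζ.sub_one_mul_prod_Ico_sub_pow hn b,
    prod_congr rfl fun j _ => hswap j, prod_mul_distrib]
  ring

end IsDomain

theorem prod_Ico_eq_chebyshev_T_sub_one_div {K : Type*} [Field K] [NeZero (2 : K)]
    {ζ : K} {n : ℕ} (hζ : IsPrimitiveRoot ζ n) (hn : 0 < n) {a : K} (ha0 : a ≠ 0) (ha1 : a ≠ 1) :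
    ∏ j ∈ Ico 1 n, ((ζ ^ j - a) * (ζ ^ j - a⁻¹)) =
      ((Chebyshev.T K n).eval ((a + a⁻¹) / 2) - 1) / ((a + a⁻¹) / 2 - 1) := by
  set w := (a + a⁻¹) / 2
  have hinv : a * a⁻¹ = 1 := mul_inv_cancel₀ ha0
  have hinv_pow : a ^ n * a⁻¹ ^ n = 1 := by rw [← mul_pow, hinv, one_pow]
  have hw2 : 2 * w = a + a⁻¹ := mul_div_cancel₀ _ two_ne_zero
  have hT := Chebyshev.two_mul_T_eval_eq_pow_add_pow hinv hw2 n
  have hprod := hζ.sub_one_mul_sub_one_mul_prod_Ico hn a a⁻¹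
  have hcoeff : (a - 1) * (a⁻¹ - 1) = -2 * (w - 1) := by linear_combination hinv + hw2
  have hw : w - 1 ≠ 0 := by
    intro h
    rw [h, mul_zero] at hcoeff
    exact mul_ne_zero (sub_ne_zero.2 ha1) (sub_ne_zero.2 (inv_ne_one.2 ha1)) hcoeff
  rw [eq_div_iff hw]
  apply mul_left_cancel₀ (neg_ne_zero.2 (two_ne_zero (α := K)))
  linear_combination
    -(∏ j ∈ Ico 1 n, ((ζ ^ j - a) * (ζ ^ j - a⁻¹))) * hcoeff + hprod + hT + hinv_pow

end IsPrimitiveRoot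

/-- for nonzero complex numbers `z_1,…,z_m`, none equal to `1`, and
`H(z) = ∏_{s=1}^m (z - z_s)(z - z_s⁻¹)`, one has
`∏_{j=1}^{n-1} H(ε_n^j) = ∏_{s=1}^m (T_n(w_s) - 1)/(w_s - 1)` where `ε_n = e^{2πi/n}`
and `w_s = (z_s + z_s⁻¹)/2`. -/
theorem statement5 (m : ℕ) (z : Fin m → ℂ) (hz0 : ∀ s, z s ≠ 0) (hz1 : ∀ s, z s ≠ 1)
    (n : ℕ) (hn : 1 ≤ n) :
    ∏ j ∈ Finset.Ico 1 n,
        ∏ s : Fin m,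
          ((Complex.exp (2 * Real.pi * Complex.I / n) ^ (j : ℤ) - z s) *
            (Complex.exp (2 * Real.pi * Complex.I / n) ^ (j : ℤ) - (z s)⁻¹)) =
      ∏ s : Fin m,
        (((Polynomial.Chebyshev.T ℂ n).eval ((z s + (z s)⁻¹) / 2) - 1) /
          ((z s + (z s)⁻¹) / 2 - 1)) := by
  have hε := Complex.isPrimitiveRoot_exp n (Nat.one_le_iff_ne_zero.mp hn)
  simp only [zpow_natCast]
  rw [prod_comm]
  exact prod_congr rfl fun s _ => hε.prod_Ico_eq_chebyshev_T_sub_one_div hn (hz0 s) (hz1 s)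
end

section
/- Let n ≥ 2 and let 1 ≤ s_1 < s_2 < … < s_k < n/2 be integers with gcd(s_1,…,s_k,n) = 1. Then n divides the number of spanning trees of the circulant graph C_n(s_1,…,s_k). -/
open Polynomial Complex Finset
open scoped Classical

/-!
Translations of `ZMod n` act on the spanning trees of the circulant graph, so it suffices that
this action is free. If a nonzero subgroup `K` of translations fixed a spanning tree, it would
permute the `n - 1` edges of the tree; since `|K|` divides `n` it cannot divide `n - 1`, so some
nonzero `g ∈ K` fixes an edge `{x, y}`. Fixing no vertex, `g` swaps its ends, so `g = y - x = ±s_j`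
with `2 g = 0`, i.e. `n ∣ 2 s_j`, impossible for `0 < 2 s_j < n`.
-/

theorem AddAction.card_dvd_card_of_stabilizer_eq_bot {G X : Type*} [AddGroup G] [AddAction G X]
    (h : ∀ x : X, AddAction.stabilizer G x = ⊥) : Nat.card G ∣ Nat.card X := by
  rw [Nat.card_congr (AddAction.selfEquivOrbitsQuotientProd h), Nat.card_prod]
  exact dvd_mul_left _ _

section Translation

variable {Γ V : Type*} [AddGroup Γ] [AddAction Γ V]

instance Sym2.instAddAction : AddAction Γ (Sym2 V) where
  vadd g := Sym2.map (g +ᵥ ·)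
  zero_vadd e := by
    change Sym2.map (fun x : V => (0 : Γ) +ᵥ x) e = e
    simp
  add_vadd g h e := by
    change Sym2.map (fun x : V => (g + h) +ᵥ x) e = Sym2.map (g +ᵥ ·) (Sym2.map (h +ᵥ ·) e)
    simp [Sym2.map_map, add_vadd]

@[simp]
theorem Sym2.vadd_mk (g : Γ) (x y : V) : g +ᵥ s(x, y) = s(g +ᵥ x, g +ᵥ y) := rfl

namespace SimpleGraph

instance instAddAction : AddAction Γ (SimpleGraph V) where
  vadd g H := H.comap (-g +ᵥ ·)
  zero_vadd H := by ext x y; change H.Adj (-(0 : Γ) +ᵥ x) (-(0 : Γ) +ᵥ y) ↔ _; simp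
  add_vadd g h H := by
    ext x y
    change H.Adj (-(g + h) +ᵥ x) (-(g + h) +ᵥ y) ↔ H.Adj (-h +ᵥ -g +ᵥ x) (-h +ᵥ -g +ᵥ y)
    simp [add_vadd]

theorem vadd_adj (g : Γ) (H : SimpleGraph V) (x y : V) :
    (g +ᵥ H).Adj x y ↔ H.Adj (-g +ᵥ x) (-g +ᵥ y) := Iff.rfl

theorem vadd_mem_edgeSet_vadd (g : Γ) (H : SimpleGraph V) (e : Sym2 V) :
    g +ᵥ e ∈ (g +ᵥ H).edgeSet ↔ e ∈ H.edgeSet := by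
  induction e with
  | _ x y => simp [vadd_adj]

theorem IsTree.vadd {H : SimpleGraph V} (hH : H.IsTree) (g : Γ) : (g +ᵥ H).IsTree :=
  (Iso.comap (AddAction.toPerm (-g)) H).isTree_iff.mpr hH

theorem IsTree.exists_ne_zero_vadd_edge_eq [Finite V] {H : SimpleGraph V} (hH : H.IsTree)
    (hdvd : Nat.card (AddAction.stabilizer Γ H) ∣ Nat.card V)
    (hne : AddAction.stabilizer Γ H ≠ ⊥) :
    ∃ g ∈ AddAction.stabilizer Γ H, g ≠ 0 ∧ ∃ e ∈ H.edgeSet, g +ᵥ e = e := by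
  by_contra! hfree
  set K := AddAction.stabilizer Γ H
  let edges : SubAddAction K (Sym2 V) :=
    { carrier := H.edgeSet
      vadd_mem' := fun g e he => by
        have := (vadd_mem_edgeSet_vadd (g : Γ) H e).mpr he
        rwa [AddAction.mem_stabilizer_iff.mp g.2] at this }
  have hstab : ∀ e : edges, AddAction.stabilizer K e = ⊥ := by
    intro e
    rw [SubAddAction.stabilizer_of_subAdd, AddSubgroup.eq_bot_iff_forall]
    intro g hg
    by_contra hg0
    exact hfree g g.2 (by exact_mod_cast hg0) e e.2 hg
  have hedges : Nat.card K ∣ Nat.card H.edgeSet :=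
    AddAction.card_dvd_card_of_stabilizer_eq_bot (X := edges) hstab
  rw [← (isTree_iff_connected_and_card.mp hH).2] at hdvd
  exact hne (AddSubgroup.card_eq_one.mp (Nat.dvd_one.mp ((Nat.dvd_add_right hedges).mp hdvd)))

end SimpleGraph

end Translation

section Circulant

open SimpleGraph

variable {G : Type*} [AddCommGroup G]

theorem SimpleGraph.vadd_circulantGraph (S : Set G) (g : G) :
    g +ᵥ circulantGraph S = circulantGraph S := by
  ext x y
  simp [vadd_adj, circulantGraph_adj]

theorem SimpleGraph.stabilizer_eq_bot_of_isTree_of_le_circulantGraph [Finite G] {S : Set G}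
    (hS : ∀ s ∈ S, s + s = 0 → s = 0) {H : SimpleGraph G} (hH : H.IsTree)
    (hle : H ≤ circulantGraph S) : AddAction.stabilizer G H = ⊥ := by
  by_contra hne
  obtain ⟨g, -, hg0, e, he, hge⟩ :=
    hH.exists_ne_zero_vadd_edge_eq (AddSubgroup.card_addSubgroup_dvd_card _) hne
  induction e using Sym2.ind with
  | _ x y =>
  simp only [Sym2.vadd_mk, vadd_eq_add, Sym2.eq_iff] at hge
  obtain ⟨hx, -⟩ | ⟨hx, hy⟩ := hge
  · exact hg0 (by simpa using hx)
  have hgg : g + g = 0 := by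
    have : g + (g + x) = 0 + x := by rw [hx, hy, zero_add]
    rwa [← add_assoc, add_left_inj] at this
  have hyx : y - x = g := by rw [← hx]; abel
  have hxy : x - y = g := by rw [← neg_sub, hyx, neg_eq_of_add_eq_zero_left hgg]
  obtain ⟨-, hxyS | hyxS⟩ := (circulantGraph_adj S x y).mp (hle he)
  · exact hg0 (hS g (hxy ▸ hxyS) hgg)
  · exact hg0 (hS g (hyx ▸ hyxS) hgg)

theorem card_dvd_numSpanningTrees_circulantGraph [Finite G] {S : Set G}
    (hS : ∀ s ∈ S, s + s = 0 → s = 0) : Nat.card G ∣ numSpanningTrees (circulantGraph S) := by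
  let trees : SubAddAction G (SimpleGraph G) :=
    { carrier := {H | H ≤ circulantGraph S ∧ H.IsTree}
      vadd_mem' := fun g H ⟨hle, hH⟩ => by
        refine ⟨?_, hH.vadd g⟩
        rw [← vadd_circulantGraph S g]
        exact fun x y h => hle h }
  have hstab : ∀ H : trees, AddAction.stabilizer G H = ⊥ := by
    intro H
    rw [SubAddAction.stabilizer_of_subAdd]
    exact stabilizer_eq_bot_of_isTree_of_le_circulantGraph hS H.2.2 H.2.1
  rw [numSpanningTrees, ← Nat.card_coe_set_eq]
  exact AddAction.card_dvd_card_of_stabilizer_eq_bot (X := trees) hstab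

end Circulant

theorem statement9_general (n k : ℕ) (hn : 2 ≤ n) (s : Fin k → ℕ) (h2 : ∀ j, 2 * s j < n) :
    n ∣ numSpanningTrees (circulant n s) := by
  have : NeZero n := ⟨by omega⟩
  have hS : ∀ x ∈ {x : ZMod n | ∃ j, x = s j}, x + x = 0 → x = 0 := by
    rintro _ ⟨j, rfl⟩ h
    have hdvd : n ∣ 2 * s j := by
      rw [← ZMod.natCast_eq_zero_iff]
      push_cast
      rwa [two_mul]
    have hsj : s j = 0 := by
      have := Nat.eq_zero_of_dvd_of_lt hdvd (h2 j)
      omega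
    simp [hsj]
  have := card_dvd_numSpanningTrees_circulantGraph hS
  rwa [Nat.card_zmod] at this

/-- `n` divides the number of spanning trees of `C_n(s_1,…,s_k)`. -/
theorem statement9 (n k : ℕ) (hn : 2 ≤ n) (hk : 0 < k) (s : Fin k → ℕ)
    (hmono : StrictMono s) (h1 : ∀ j, 1 ≤ s j) (h2 : ∀ j, 2 * s j < n)
    (hgcd : Nat.gcd (Finset.univ.gcd s) n = 1) :
    n ∣ numSpanningTrees (circulant n s) :=
  statement9_general n k hn s h2
end
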